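/- Let $D$ be a triangulated category, $\mathfrak{A}\subset D$ the heart of a bounded $t$-structure, and $(\mathcal{T},\mathcal{F})$ a torsion pair in $\mathfrak{A}$. Then the full subcategory $R_\mathcal{T}\mathfrak{A}=\{E\in D\mid H^i(E)=0 \text{ for } i\notin\{-1,0\},\ H^{-1}(E)\in\mathcal{F},\ H^0(E)\in\mathcal{T}\}$ is the heart of a bounded $t$-structure on $D$. -/

import Mathlib

/-!
The tilted t-structure has aisle `{E ∈ D^{≤0} | Hom(E, 𝓕) = 0}` and coaisle
`{E ∈ D^{≥-1} | Hom(𝒯[1], E) = 0}`, suitably shifted.  Orthogonality, stability under shifts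
and the description of the heart follow from the long exact `Hom` sequences of distinguished
triangles together with the torsion-pair axioms.

The real work is the truncation triangle of an object `A`.  Put `A' = τ^{≤0} A` and let `T₀` be
the torsion part of `H⁰(A')`; extending `τ^{≤-1} A'` by `T₀` gives `X` with a map of triangles
`(τ^{≤-1} A' → X → T₀) ⟶ (τ^{≤-1} A' → A' → H⁰(A'))`, and the cone `Y` of `X → A' → A` is the
candidate for the coaisle part.  Without the octahedral axiom `Y` cannot be identified, so
`Hom(W, Y) = 0` for `W ∈ D^{≤-1} ∪ 𝒯` is instead obtained from the four lemma applied to the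
long exact sequences of `Hom(W, -)`.
-/

open CategoryTheory CategoryTheory.Limits CategoryTheory.Pretriangulated
  CategoryTheory.Triangulated

universe v u

variable {D : Type u} [Category.{v} D] [Preadditive D] [HasZeroObject D] [HasShift D ℤ]
  [∀ n : ℤ, (shiftFunctor D n).Additive] [Pretriangulated D]

/-- The heart of a t-structure, as a predicate on objects. -/
def heartP (t : TStructure D) : D → Prop := fun X => t.le 0 X ∧ t.ge 0 X

/-- A t-structure is bounded if every object is bounded above and below. -/
def IsBoundedT (t : TStructure D) : Prop := ∀ X : D, ∃ a b : ℤ, t.ge a X ∧ t.le b X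

/-- The tilted heart `R_𝒯𝔄`: objects `E` admitting a distinguished triangle
`F₀⟦1⟧ ⟶ E ⟶ T₀ ⟶ F₀⟦2⟧` with `F₀ ∈ 𝓕`, `T₀ ∈ 𝒯`. -/
def tiltedHeart (T F : D → Prop) : D → Prop := fun E =>
  ∃ (F₀ T₀ : D) (f : F₀⟦(1:ℤ)⟧ ⟶ E) (g : E ⟶ T₀) (h : T₀ ⟶ F₀⟦(1:ℤ)⟧⟦(1:ℤ)⟧),
    F F₀ ∧ T T₀ ∧ Triangle.mk f g h ∈ distTriang D

namespace CategoryTheory.Pretriangulated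

variable {W : D}

lemma comp_mor₁_surjective {T : Triangle D} (hT : T ∈ distTriang D)
    (h : ∀ g : W ⟶ T.obj₃, g = 0) : Function.Surjective fun g : W ⟶ T.obj₁ => g ≫ T.mor₁ :=
  fun f => (Triangle.coyoneda_exact₂ T hT f (h _)).imp fun _ hg => hg.symm

lemma eq_zero_of_comp_shift_mor₁_eq_zero {T : Triangle D} (hT : T ∈ distTriang D)
    (h : ∀ g : W ⟶ T.obj₃, g = 0) (g : W ⟶ T.obj₁⟦(1 : ℤ)⟧) (hg : g ≫ T.mor₁⟦1⟧' = 0) :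
    g = 0 := by
  obtain ⟨k, rfl⟩ := Triangle.coyoneda_exact₁ T hT g hg
  rw [h k, zero_comp]

lemma eq_zero_of_comp_mor₁_eq_zero {T : Triangle D} (hT : T ∈ distTriang D)
    (h : ∀ g : W ⟶ T.obj₃⟦(-1 : ℤ)⟧, g = 0) (g : W ⟶ T.obj₁) (hg : g ≫ T.mor₁ = 0) : g = 0 := by
  obtain ⟨k, rfl⟩ := Triangle.coyoneda_exact₂ _ (inv_rot_of_distTriang T hT) g hg
  exact (h k).symm ▸ zero_comp

lemma hom_obj₃_eq_zero {T : Triangle D} (hT : T ∈ distTriang D)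
    (h₁ : Function.Surjective fun g : W ⟶ T.obj₁ => g ≫ T.mor₁)
    (h₂ : ∀ g : W ⟶ T.obj₁⟦(1 : ℤ)⟧, g ≫ T.mor₁⟦1⟧' = 0 → g = 0) (f : W ⟶ T.obj₃) :
    f = 0 := by
  have hf : f ≫ T.mor₃ = 0 :=
    h₂ _ (by rw [Category.assoc, comp_distTriang_mor_zero₃₁ T hT, comp_zero])
  obtain ⟨g, rfl⟩ := Triangle.coyoneda_exact₃ T hT f hf
  obtain ⟨k, rfl⟩ := h₁ g
  simp only [Category.assoc, comp_distTriang_mor_zero₁₂ T hT, comp_zero]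

lemma isZero₃_of_mor₂_eq_zero {T : Triangle D} (hT : T ∈ distTriang D) (h : T.mor₂ = 0)
    (h₃₁ : ∀ s : T.obj₁⟦(1 : ℤ)⟧ ⟶ T.obj₃, s = 0) : IsZero T.obj₃ := by
  obtain ⟨s, hs⟩ := Triangle.yoneda_exact₃ T hT (𝟙 _) (by rw [h, zero_comp])
  rw [IsZero.iff_id_eq_zero, hs, h₃₁ s, comp_zero]

lemma isZero₁_of_mor₁_eq_zero {T : Triangle D} (hT : T ∈ distTriang D) (h : T.mor₁ = 0)
    (h₁₃ : ∀ s : T.obj₁ ⟶ T.obj₃⟦(-1 : ℤ)⟧, s = 0) : IsZero T.obj₁ := by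
  obtain ⟨s, hs⟩ := Triangle.coyoneda_exact₂ _ (inv_rot_of_distTriang T hT) (𝟙 T.obj₁)
    ((Category.id_comp _).trans h)
  rw [IsZero.iff_id_eq_zero]
  exact hs.trans ((h₁₃ s).symm ▸ zero_comp)

variable {T₁ T₂ : Triangle D} (φ : T₁ ⟶ T₂) (hT₁ : T₁ ∈ distTriang D) (hT₂ : T₂ ∈ distTriang D)
include hT₁ hT₂

/-- The epimorphic half of the four lemma, for the long exact sequences of `Hom(W, -)`. -/
lemma comp_hom₂_surjective
    (h₁ : Function.Surjective fun g : W ⟶ T₁.obj₁ => g ≫ φ.hom₁)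
    (h₃ : Function.Surjective fun g : W ⟶ T₁.obj₃ => g ≫ φ.hom₃)
    (h₄ : ∀ g : W ⟶ T₁.obj₁⟦(1 : ℤ)⟧, g ≫ φ.hom₁⟦1⟧' = 0 → g = 0) :
    Function.Surjective fun g : W ⟶ T₁.obj₂ => g ≫ φ.hom₂ := by
  intro f
  obtain ⟨s, hs⟩ : ∃ s, s ≫ φ.hom₃ = f ≫ T₂.mor₂ := h₃ _
  obtain ⟨x, rfl⟩ := Triangle.coyoneda_exact₃ T₁ hT₁ s (h₄ _ (by
    simp only [Category.assoc, φ.comm₃, reassoc_of% hs, comp_distTriang_mor_zero₂₃ T₂ hT₂,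
      comp_zero]))
  obtain ⟨b, hb⟩ := Triangle.coyoneda_exact₂ T₂ hT₂ (f - x ≫ φ.hom₂) (by
    rw [Preadditive.sub_comp, Category.assoc, ← φ.comm₂, ← Category.assoc, hs, sub_self])
  obtain ⟨a, rfl⟩ := h₁ b
  refine ⟨x + a ≫ T₁.mor₁, ?_⟩
  simp only [Preadditive.add_comp, Category.assoc, φ.comm₁] at hb ⊢
  rw [← hb, add_sub_cancel]

/-- The monomorphic half of the four lemma, for the long exact sequences of `Hom(W, -)`. -/
lemma eq_zero_of_comp_hom₃_eq_zero
    (h₁ : Function.Surjective fun g : W ⟶ T₁.obj₁ => g ≫ φ.hom₁)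
    (h₂ : ∀ g : W ⟶ T₁.obj₂, g ≫ φ.hom₂ = 0 → g = 0)
    (h₄ : ∀ g : W ⟶ T₁.obj₁⟦(1 : ℤ)⟧, g ≫ φ.hom₁⟦1⟧' = 0 → g = 0)
    (g : W ⟶ T₁.obj₃) (hg : g ≫ φ.hom₃ = 0) : g = 0 := by
  obtain ⟨y, rfl⟩ := Triangle.coyoneda_exact₃ T₁ hT₁ g (h₄ _ (by
    rw [Category.assoc, φ.comm₃, reassoc_of% hg, zero_comp]))
  obtain ⟨z, hz⟩ := Triangle.coyoneda_exact₂ T₂ hT₂ (y ≫ φ.hom₂) (by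
    rw [Category.assoc, ← φ.comm₂, ← Category.assoc, hg])
  obtain ⟨a, rfl⟩ := h₁ z
  have hy : y = a ≫ T₁.mor₁ := sub_eq_zero.1 (h₂ _ (by
    rw [Preadditive.sub_comp, hz, Category.assoc, Category.assoc, φ.comm₁, sub_self]))
  rw [hy, Category.assoc, comp_distTriang_mor_zero₁₂ T₁ hT₁, comp_zero]

lemma eq_zero_of_comp_shift_hom₂_eq_zero
    (h₃ : Function.Surjective fun g : W ⟶ T₁.obj₃ => g ≫ φ.hom₃)
    (h₄ : ∀ g : W ⟶ T₁.obj₁⟦(1 : ℤ)⟧, g ≫ φ.hom₁⟦1⟧' = 0 → g = 0)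
    (h₆ : ∀ g : W ⟶ T₁.obj₃⟦(1 : ℤ)⟧, g ≫ φ.hom₃⟦1⟧' = 0 → g = 0)
    (g : W ⟶ T₁.obj₂⟦(1 : ℤ)⟧) (hg : g ≫ φ.hom₂⟦1⟧' = 0) : g = 0 :=
  eq_zero_of_comp_hom₃_eq_zero ((rotate D).map ((rotate D).map φ))
    (rot_of_distTriang _ (rot_of_distTriang _ hT₁)) (rot_of_distTriang _ (rot_of_distTriang _ hT₂))
    h₃ h₄ h₆ g hg

end CategoryTheory.Pretriangulated

namespace CategoryTheory.Triangulated.TStructure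

variable (t : TStructure D)

lemma le_obj₃ {T : Triangle D} (hT : T ∈ distTriang D) {m n : ℤ} (h₁ : t.le m T.obj₁)
    (h₂ : t.le n T.obj₂) (hmn : m ≤ n + 1) : t.le n T.obj₃ :=
  (t.isLE₂ _ (rot_of_distTriang _ hT) n ⟨h₂⟩
    ⟨t.le_monotone (by omega) _ (t.le_shift m 1 (m - 1) (by omega) _ h₁)⟩).le

lemma ge_obj₁ {T : Triangle D} (hT : T ∈ distTriang D) {m n : ℤ} (h₂ : t.ge n T.obj₂)
    (h₃ : t.ge m T.obj₃) (hmn : n ≤ m + 1) : t.ge n T.obj₁ :=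
  (t.isGE₂ _ (inv_rot_of_distTriang _ hT) n
    ⟨t.ge_antitone (by omega) _ (t.ge_shift m (-1) (m + 1) (by omega) _ h₃)⟩ ⟨h₂⟩).ge

lemma exists_distTriang_heartP (X : D) (hX : t.le 0 X) :
    ∃ (X₁ X₀ : D) (f : X₁ ⟶ X) (g : X ⟶ X₀) (h : X₀ ⟶ X₁⟦(1 : ℤ)⟧),
      t.le (-1) X₁ ∧ heartP t X₀ ∧ Triangle.mk f g h ∈ distTriang D := by
  obtain ⟨X₁, X₀, h₁, h₀, f, g, h, hT⟩ := t.exists_triangle X (-1) 0 (by omega)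
  exact ⟨X₁, X₀, f, g, h, h₁, ⟨t.le_obj₃ hT h₁ hX (by omega), h₀⟩, hT⟩

/-- The aisle of the tilted t-structure: `t.tiltLE F 0` consists of the objects `E` with
`Hⁱ(E) = 0` for `i > 0` and `H⁰(E) ∈ 𝒯`. -/
def tiltLE (F : D → Prop) (n : ℤ) : ObjectProperty D :=
  fun X => t.le n X ∧ ∀ ⦃Y⦄ (f : X ⟶ Y⟦-n⟧), F Y → f = 0

/-- The coaisle of the tilted t-structure: `t.tiltGE T 0` consists of the objects `E` with
`Hⁱ(E) = 0` for `i < -1` and `H⁻¹(E) ∈ 𝓕`. -/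
def tiltGE (T : D → Prop) (n : ℤ) : ObjectProperty D :=
  fun X => t.ge (n - 1) X ∧ ∀ ⦃Z⦄ (f : Z⟦1 - n⟧ ⟶ X), T Z → f = 0

/-- A torsion pair `(𝒯, 𝓕)` in the heart of `t`, with short exact sequences of the heart
written as distinguished triangles. -/
structure IsTorsionPair (T F : D → Prop) : Prop where
  heartP_of_torsion : ∀ X, T X → heartP t X
  heartP_of_free : ∀ X, F X → heartP t X
  hom_eq_zero : ∀ (X Y : D) (f : X ⟶ Y), T X → F Y → f = 0
  exists_distTriang : ∀ E, heartP t E → ∃ (A B : D) (f : A ⟶ E) (g : E ⟶ B)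
    (h : B ⟶ A⟦(1:ℤ)⟧), T A ∧ F B ∧ Triangle.mk f g h ∈ distTriang D

variable {t} {T F : D → Prop}

lemma tiltLE_zero_iff (X : D) :
    t.tiltLE F 0 X ↔ t.le 0 X ∧ ObjectProperty.leftOrthogonal F X := by
  refine and_congr Iff.rfl ⟨fun h Y f hY => ?_, fun h Y f hY => ?_⟩
  · rw [← cancel_mono ((shiftFunctorZero' D (-0 : ℤ) neg_zero).app Y).inv, zero_comp]
    exact h _ hY
  · rw [← cancel_mono ((shiftFunctorZero' D (-0 : ℤ) neg_zero).app Y).hom, zero_comp]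
    exact h _ hY

lemma tiltGE_one_iff (X : D) :
    t.tiltGE T 1 X ↔ t.ge 0 X ∧ ObjectProperty.rightOrthogonal T X := by
  refine and_congr Iff.rfl ⟨fun h Z f hZ => ?_, fun h Z f hZ => ?_⟩
  · rw [← cancel_epi ((shiftFunctorZero' D (1 - 1 : ℤ) (sub_self 1)).app Z).hom, comp_zero]
    exact h _ hZ
  · rw [← cancel_epi ((shiftFunctorZero' D (1 - 1 : ℤ) (sub_self 1)).app Z).inv, comp_zero]
    exact h _ hZ

instance (n : ℤ) : (t.tiltLE F n).IsClosedUnderIsomorphisms where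
  of_iso e hX := ⟨(t.le n).prop_of_iso e hX.1, fun Y f hY => by
    rw [← cancel_epi e.hom, comp_zero]
    exact hX.2 _ hY⟩

instance (n : ℤ) : (t.tiltGE T n).IsClosedUnderIsomorphisms where
  of_iso e hX := ⟨(t.ge (n - 1)).prop_of_iso e hX.1, fun Z f hZ => by
    rw [← cancel_mono e.inv, zero_comp]
    exact hX.2 _ hZ⟩

lemma tiltLE_shift (n a n' : ℤ) (h : a + n' = n) (X : D) (hX : t.tiltLE F n X) :
    t.tiltLE F n' (X⟦a⟧) := by
  refine ⟨t.le_shift n a n' h X hX.1, fun Y f hY => ?_⟩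
  let e := (shiftFunctorAdd' D (-n) a (-n') (by omega)).app Y
  obtain ⟨g, hg⟩ := (shiftFunctor D a).map_surjective (f ≫ e.hom)
  rw [← cancel_mono e.hom, zero_comp, ← hg, hX.2 g hY, Functor.map_zero]

lemma tiltGE_shift (n a n' : ℤ) (h : a + n' = n) (X : D) (hX : t.tiltGE T n X) :
    t.tiltGE T n' (X⟦a⟧) := by
  refine ⟨t.ge_shift (n - 1) a (n' - 1) (by omega) X hX.1, fun Z f hZ => ?_⟩
  let e := (shiftFunctorAdd' D (1 - n) a (1 - n') (by omega)).app Z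
  obtain ⟨g, hg⟩ := (shiftFunctor D a).map_surjective (e.inv ≫ f)
  rw [← cancel_epi e.inv, comp_zero, ← hg, hX.2 g hZ, Functor.map_zero]

lemma tiltedHeart_of_distTriang {E' E T₀ F₀ : D} (u : E' ⟶ E) (v : E ⟶ T₀)
    (w : T₀ ⟶ E'⟦(1 : ℤ)⟧) (hT : Triangle.mk u v w ∈ distTriang D) (e : E' ≅ F₀⟦(1 : ℤ)⟧)
    (hF₀ : F F₀) (hT₀ : T T₀) : tiltedHeart T F E :=
  ⟨F₀, T₀, e.inv ≫ u, v, w ≫ e.hom⟦1⟧', hF₀, hT₀, isomorphic_distinguished _ hT _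
    (Triangle.isoMk _ _ e.symm (Iso.refl _) (Iso.refl _) (by simp [Triangle.mk])
      (by simp [Triangle.mk]) (by simp [Triangle.mk, ← Functor.map_comp]))⟩

namespace IsTorsionPair

variable (P : t.IsTorsionPair T F)
include P

lemma exists_torsion_iso (E : D) (hE : heartP t E) (hEF : ObjectProperty.leftOrthogonal F E) :
    ∃ T₀, T T₀ ∧ Nonempty (T₀ ≅ E) := by
  obtain ⟨T₀, F₀, i, q, r, hT₀, hF₀, hT⟩ := P.exists_distTriang E hE
  have : IsIso i := (Triangle.isZero₃_iff_isIso₁ _ hT).1 (isZero₃_of_mor₂_eq_zero hT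
    (hEF q hF₀) fun s => t.zero_of_isLE_of_isGE s (-1) 0 (by omega)
      ⟨t.le_shift 0 1 (-1) (by omega) _ (P.heartP_of_torsion T₀ hT₀).1⟩
      ⟨(P.heartP_of_free F₀ hF₀).2⟩)
  exact ⟨T₀, hT₀, ⟨asIso i⟩⟩

lemma exists_free_iso (E : D) (hE : heartP t E) (hTE : ObjectProperty.rightOrthogonal T E) :
    ∃ F₀, F F₀ ∧ Nonempty (E ≅ F₀) := by
  obtain ⟨T₀, F₀, i, q, r, hT₀, hF₀, hT⟩ := P.exists_distTriang E hE
  have : IsIso q := (Triangle.isZero₁_iff_isIso₂ _ hT).1 (isZero₁_of_mor₁_eq_zero hT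
    (hTE i hT₀) fun s => t.zero_of_isLE_of_isGE s 0 1 (by omega)
      ⟨(P.heartP_of_torsion T₀ hT₀).1⟩
      ⟨t.ge_shift 0 (-1) 1 (by omega) _ (P.heartP_of_free F₀ hF₀).2⟩)
  exact ⟨F₀, hF₀, ⟨asIso q⟩⟩

lemma leftOrthogonal_of_le {X : D} (hX : t.le (-1) X) : ObjectProperty.leftOrthogonal F X :=
  fun _ f hY => t.zero_of_isLE_of_isGE f (-1) 0 (by omega) ⟨hX⟩ ⟨(P.heartP_of_free _ hY).2⟩

lemma exists_distTriang_torsion (X : D) (hX : t.tiltLE F 0 X) :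
    ∃ (X₁ T₀ : D) (u : X₁ ⟶ X) (v : X ⟶ T₀) (w : T₀ ⟶ X₁⟦(1 : ℤ)⟧),
      t.le (-1) X₁ ∧ T T₀ ∧ Triangle.mk u v w ∈ distTriang D := by
  rw [tiltLE_zero_iff] at hX
  obtain ⟨X₁, X₀, u, v, w, h₁, h₀, hT⟩ := t.exists_distTriang_heartP X hX.1
  obtain ⟨T₀, hT₀, ⟨e⟩⟩ := P.exists_torsion_iso X₀ h₀
    ((ObjectProperty.leftOrthogonal F).ext_of_isTriangulatedClosed₂ _ (rot_of_distTriang _ hT)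
      hX.2 (P.leftOrthogonal_of_le
        (t.le_monotone (by omega) _ (t.le_shift (-1) 1 (-2) (by omega) _ h₁))))
  exact ⟨X₁, T₀, u, v ≫ e.inv, e.hom ≫ w, h₁, hT₀, isomorphic_distinguished _ hT _
    (Triangle.isoMk _ _ (Iso.refl _) (Iso.refl _) e (by simp [Triangle.mk])
      (by simp [Triangle.mk]) (by simp [Triangle.mk]))⟩

lemma tilt_zero ⦃X Y : D⦄ (f : X ⟶ Y) (hX : t.tiltLE F 0 X) (hY : t.tiltGE T 1 Y) : f = 0 := by
  rw [tiltGE_one_iff] at hY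
  obtain ⟨X₁, T₀, u, v, w, h₁, hT₀, hT⟩ := P.exists_distTriang_torsion X hX
  obtain ⟨f₀, rfl⟩ := Triangle.yoneda_exact₂ _ hT f
    (t.zero_of_isLE_of_isGE _ (-1) 0 (by omega) ⟨h₁⟩ ⟨hY.1⟩)
  rw [hY.2 f₀ hT₀]
  exact comp_zero

lemma tiltLE_zero_le_one : t.tiltLE F 0 ≤ t.tiltLE F 1 := fun X hX =>
  ⟨t.le_monotone (by omega) _ hX.1, fun Y f hY => t.zero_of_isLE_of_isGE f 0 1 (by omega)
    ⟨hX.1⟩ ⟨t.ge_shift 0 (-1) 1 (by omega) _ (P.heartP_of_free Y hY).2⟩⟩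

lemma tiltGE_one_le_zero : t.tiltGE T 1 ≤ t.tiltGE T 0 := fun X hX =>
  ⟨t.ge_antitone (by omega) _ hX.1, fun Z f hZ => t.zero_of_isLE_of_isGE f (-1) 0 (by omega)
    ⟨t.le_shift 0 1 (-1) (by omega) _ (P.heartP_of_torsion Z hZ).1⟩ ⟨hX.1⟩⟩

lemma exists_tiltLE_approximation (A : D) (hA : t.le 0 A) :
    ∃ (X : D) (φ : X ⟶ A), t.tiltLE F 0 X ∧ ∀ W, t.le (-1) W ∨ T W →
      Function.Surjective (fun g : W ⟶ X => g ≫ φ) ∧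
        ∀ g : W ⟶ X⟦(1 : ℤ)⟧, g ≫ φ⟦1⟧' = 0 → g = 0 := by
  obtain ⟨B, H, b, p, δ, hB, hH, hTB⟩ := t.exists_distTriang_heartP A hA
  obtain ⟨T₀, F₀, i, q, r, hT₀, hF₀, hTH⟩ := P.exists_distTriang H hH
  obtain ⟨X, x, π, hTX⟩ := distinguished_cocone_triangle₂ (i ≫ δ)
  obtain ⟨φ, hφ₁, hφ₂⟩ := complete_distinguished_triangle_morphism₂ _ _ hTX hTB (𝟙 B) i
    (by simp [Triangle.mk])
  let Φ : Triangle.mk x π (i ≫ δ) ⟶ Triangle.mk b p δ :=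
    Triangle.homMk _ _ (𝟙 B) φ i hφ₁ hφ₂ (by simp [Triangle.mk])
  refine ⟨X, φ, (tiltLE_zero_iff X).2 ⟨?_, ?_⟩, fun W hW => ?_⟩
  · exact (t.isLE₂ _ hTX 0 ⟨t.le_monotone (by omega) _ hB⟩ ⟨(P.heartP_of_torsion T₀ hT₀).1⟩).le
  · exact (ObjectProperty.leftOrthogonal F).ext_of_isTriangulatedClosed₂ _ hTX
      (P.leftOrthogonal_of_le hB) fun _ f hY => P.hom_eq_zero _ _ f hT₀ hY
  have hWF : ∀ g : W ⟶ F₀, g = 0 := fun g => hW.elim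
    (fun hW => t.zero_of_isLE_of_isGE g (-1) 0 (by omega) ⟨hW⟩ ⟨(P.heartP_of_free F₀ hF₀).2⟩)
    (fun hW => P.hom_eq_zero _ _ g hW hF₀)
  have hWi : Function.Surjective fun g : W ⟶ T₀ => g ≫ i := comp_mor₁_surjective hTH hWF
  have hid₁ : ∀ g : W ⟶ B⟦(1 : ℤ)⟧, g ≫ (𝟙 B)⟦1⟧' = 0 → g = 0 := fun g hg => by
    simpa using hg
  exact ⟨comp_hom₂_surjective Φ hTX hTB (fun g => ⟨g, Category.comp_id g⟩) hWi hid₁,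
    eq_zero_of_comp_shift_hom₂_eq_zero Φ hTX hTB hWi hid₁
      (eq_zero_of_comp_shift_mor₁_eq_zero hTH hWF)⟩

lemma exists_tilt_triangle (A : D) :
    ∃ (X Y : D) (_ : t.tiltLE F 0 X) (_ : t.tiltGE T 1 Y) (f : X ⟶ A) (g : A ⟶ Y)
      (h : Y ⟶ X⟦(1 : ℤ)⟧), Triangle.mk f g h ∈ distTriang D := by
  obtain ⟨A', A'', hA', hA'', a, a', a'', hTA⟩ := t.exists_triangle A 0 1 (by omega)
  obtain ⟨X, φ, hX, hφ⟩ := P.exists_tiltLE_approximation A' hA'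
  obtain ⟨Y, g, h, hTY⟩ := distinguished_cocone_triangle (φ ≫ a)
  have hY : ∀ W, t.le (-1) W ∨ T W → ∀ f : W ⟶ Y, f = 0 := by
    intro W hW
    have hWA'' : ∀ g : W ⟶ A'', g = 0 := fun g => t.zero_of_isLE_of_isGE g 0 1 (by omega)
      ⟨hW.elim (t.le_monotone (by omega) _) fun hW => (P.heartP_of_torsion W hW).1⟩ ⟨hA''⟩
    obtain ⟨hsurj, hinj⟩ := hφ W hW
    refine hom_obj₃_eq_zero hTY (fun f => ?_) (fun (g : W ⟶ X⟦(1 : ℤ)⟧) hg => hinj g ?_)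
    · obtain ⟨f', rfl⟩ := comp_mor₁_surjective hTA hWA'' f
      obtain ⟨f'', rfl⟩ := hsurj f'
      exact ⟨f'', (Category.assoc _ _ _).symm⟩
    · change g ≫ (φ ≫ a)⟦1⟧' = 0 at hg
      rw [Functor.map_comp, ← Category.assoc] at hg
      exact eq_zero_of_comp_shift_mor₁_eq_zero hTA hWA'' _ hg
  refine ⟨X, Y, hX, (tiltGE_one_iff Y).2 ⟨?_, fun W f hW => hY W (Or.inr hW) f⟩, φ ≫ a, g, h, hTY⟩
  exact ((t.isGE_iff_orthogonal (-1) 0 (by omega) Y).2 fun W f hW => hY W (Or.inl hW.le) f).ge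

def tilt : TStructure D where
  le := t.tiltLE F
  ge := t.tiltGE T
  le_shift := tiltLE_shift
  ge_shift := tiltGE_shift
  zero' := P.tilt_zero
  le_zero_le := P.tiltLE_zero_le_one
  ge_one_le := P.tiltGE_one_le_zero
  exists_triangle_zero_one := P.exists_tilt_triangle

lemma isBoundedT_tilt (h : IsBoundedT t) : IsBoundedT P.tilt := fun X => by
  obtain ⟨a, b, ha, hb⟩ := h X
  refine ⟨a, b + 1, ⟨t.ge_antitone (by omega) _ ha, fun Z f hZ => ?_⟩,
    ⟨t.le_monotone (by omega) _ hb, fun Y f hY => ?_⟩⟩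
  · exact t.zero_of_isLE_of_isGE f (a - 1) a (by omega)
      ⟨t.le_shift 0 (1 - a) (a - 1) (by omega) _ (P.heartP_of_torsion Z hZ).1⟩ ⟨ha⟩
  · exact t.zero_of_isLE_of_isGE f b (b + 1) (by omega)
      ⟨hb⟩ ⟨t.ge_shift 0 (-(b + 1)) (b + 1) (by omega) _ (P.heartP_of_free Y hY).2⟩

lemma tiltedHeart_of_heartP_tilt (E : D) (hE : heartP P.tilt E) : tiltedHeart T F E := by
  obtain ⟨hle, hge⟩ := hE
  obtain ⟨E', T₀, u, v, w, hE', hT₀, hT⟩ := P.exists_distTriang_torsion E hle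
  have hE'ge : t.ge (-1) E' := t.ge_obj₁ hT hge.1 (P.heartP_of_torsion T₀ hT₀).2 (by omega)
  have hM : heartP t (E'⟦(-1 : ℤ)⟧) :=
    ⟨t.le_shift (-1) (-1) 0 (by omega) _ hE', t.ge_shift (-1) (-1) 0 (by omega) _ hE'ge⟩
  let e := (shiftFunctorCompIsoId D (-1 : ℤ) 1 (by omega)).app E'
  have hMT : ObjectProperty.rightOrthogonal T (E'⟦(-1 : ℤ)⟧) := fun Z g hZ => by
    refine (shiftFunctor D (1 : ℤ)).map_injective ?_
    rw [Functor.map_zero, ← cancel_mono e.hom, zero_comp]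
    refine eq_zero_of_comp_mor₁_eq_zero hT (fun k => t.zero_of_isLE_of_isGE k (-1) 1 (by omega)
      ⟨t.le_shift 0 1 (-1) (by omega) _ (P.heartP_of_torsion Z hZ).1⟩
      ⟨t.ge_shift 0 (-1) 1 (by omega) _ (P.heartP_of_torsion T₀ hT₀).2⟩) _
      ((Category.assoc _ _ _).trans (hge.2 _ hZ))
  obtain ⟨F₀, hF₀, ⟨e'⟩⟩ := P.exists_free_iso _ hM hMT
  exact tiltedHeart_of_distTriang u v w hT (e.symm ≪≫ (shiftFunctor D (1 : ℤ)).mapIso e') hF₀ hT₀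

lemma heartP_tilt_of_tiltedHeart (E : D) (hE : tiltedHeart T F E) : heartP P.tilt E := by
  obtain ⟨F₀, T₀, f, g, h, hF₀, hT₀, hT⟩ := hE
  have hF₀' := P.heartP_of_free F₀ hF₀
  have hT₀' := P.heartP_of_torsion T₀ hT₀
  refine ⟨(tiltLE_zero_iff E).2 ⟨?_, ?_⟩, ⟨?_, fun Z k hZ => ?_⟩⟩
  · exact (t.isLE₂ _ hT 0 ⟨t.le_monotone (by omega) _ (t.le_shift 0 1 (-1) (by omega) _ hF₀'.1)⟩
      ⟨hT₀'.1⟩).le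
  · exact (ObjectProperty.leftOrthogonal F).ext_of_isTriangulatedClosed₂ _ hT
      (P.leftOrthogonal_of_le (t.le_shift 0 1 (-1) (by omega) _ hF₀'.1))
      fun _ f hY => P.hom_eq_zero _ _ f hT₀ hY
  · exact (t.isGE₂ _ hT (-1) ⟨t.ge_shift 0 1 (-1) (by omega) _ hF₀'.2⟩
      ⟨t.ge_antitone (by omega) _ hT₀'.2⟩).ge
  · obtain ⟨k', rfl⟩ := Triangle.coyoneda_exact₂ _ hT k (t.zero_of_isLE_of_isGE _ (-1) 0
      (by omega) ⟨t.le_shift 0 1 (-1) (by omega) _ (P.heartP_of_torsion Z hZ).1⟩ ⟨hT₀'.2⟩)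
    obtain ⟨k'', rfl⟩ := (shiftFunctor D (1 : ℤ)).map_surjective k'
    rw [P.hom_eq_zero _ _ k'' hZ hF₀, Functor.map_zero]
    exact zero_comp

lemma heartP_tilt_iff (E : D) : heartP P.tilt E ↔ tiltedHeart T F E :=
  ⟨P.tiltedHeart_of_heartP_tilt E, P.heartP_tilt_of_tiltedHeart E⟩

end IsTorsionPair

end CategoryTheory.Triangulated.TStructure

theorem happel_reiten_smalo_tilting
    (t : TStructure D) (hbounded : IsBoundedT t)
    (T F : D → Prop)
    -- `(𝒯, 𝓕)` is a torsion pair in the heart `𝔄` of `t`: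
    (hT : ∀ X, T X → heartP t X) (hF : ∀ X, F X → heartP t X)
    (hhom : ∀ (X Y : D) (f : X ⟶ Y), T X → F Y → f = 0)
    (hses : ∀ E, heartP t E → ∃ (A B : D) (f : A ⟶ E) (g : E ⟶ B)
      (h : B ⟶ A⟦(1:ℤ)⟧), T A ∧ F B ∧ Triangle.mk f g h ∈ distTriang D) :
    -- the tilted subcategory is the heart of a bounded t-structure:
    ∃ t' : TStructure D, IsBoundedT t' ∧
      ∀ X : D, heartP t' X ↔ tiltedHeart T F X := by
  have P : t.IsTorsionPair T F := ⟨hT, hF, hhom, hses⟩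
  exact ⟨P.tilt, P.isBoundedT_tilt hbounded, P.heartP_tilt_iff⟩
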